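/- Let s_{12}, s_{13}, s_{23} be scalars such that the polynomial 2(m_{12}m_{13} + m_{12}m_{23} + m_{13}m_{23}) − (m_{12}² + m_{13}² + m_{23}²) in the variables m_{12}, m_{13}, m_{23} is mapped to a scalar multiple of itself under the substitution m_{ij} ↦ s_{ij} m_{ij}. Then s_{12} = s_{13} = s_{23}. -/

import Mathlib

/-!
On the coordinate plane `m₂₃ = 0` the determinant restricts to `-(m₁₂ - m₁₃)²`, which vanishes
at `(1, 1, 0)`. Evaluating the scaling identity there gives `(s₁₂ - s₁₃)² = 0`; the plane
`m₁₂ = 0` gives `s₁₃ = s₂₃` in the same way.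
-/

open MvPolynomial

/-- The simplicial volume determinant of a 1-dimensional triangle, as a polynomial
in the squared edge lengths `m₁₂ = X 0`, `m₁₃ = X 1`, `m₂₃ = X 2`. -/
noncomputable def simplicialVolDet : MvPolynomial (Fin 3) ℂ :=
  2 * (X 0 * X 1 + X 0 * X 2 + X 1 * X 2) - (X 0 ^ 2 + X 1 ^ 2 + X 2 ^ 2)

theorem MvPolynomial.eval_aeval_C_mul_X {R σ : Type*} [CommSemiring R] (s x : σ → R)
    (p : MvPolynomial σ R) :
    eval x (aeval (fun i => C (s i) * X i) p) = eval (s * x) p := by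
  rw [map_aeval]
  congr 1
  ext <;> simp

theorem eval_simplicialVolDet (x : Fin 3 → ℂ) :
    eval x simplicialVolDet =
      2 * (x 0 * x 1 + x 0 * x 2 + x 1 * x 2) - (x 0 ^ 2 + x 1 ^ 2 + x 2 ^ 2) := by
  simp [simplicialVolDet]

theorem eval_simplicialVolDet_of_apply_two_eq_zero {x : Fin 3 → ℂ} (hx : x 2 = 0) :
    eval x simplicialVolDet = -(x 0 - x 1) ^ 2 := by
  rw [eval_simplicialVolDet, hx]
  ring

theorem eval_simplicialVolDet_of_apply_zero_eq_zero {x : Fin 3 → ℂ} (hx : x 0 = 0) :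
    eval x simplicialVolDet = -(x 1 - x 2) ^ 2 := by
  rw [eval_simplicialVolDet, hx]
  ring

/-- If the simplicial volume determinant
`2(m₁₂m₁₃ + m₁₂m₂₃ + m₁₃m₂₃) − (m₁₂² + m₁₃² + m₂₃²)` is mapped to a scalar
multiple of itself under the substitution `m_ij ↦ s_ij · m_ij`, then the three
scalars `s_ij` are all equal. -/
theorem simplicial_voldet_scale (s : Fin 3 → ℂ)
    (h : ∃ c : ℂ,
      aeval (fun i => MvPolynomial.C (s i) * (X i : MvPolynomial (Fin 3) ℂ))
          simplicialVolDet
        = MvPolynomial.C c * simplicialVolDet) :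
    s 0 = s 1 ∧ s 1 = s 2 := by
  obtain ⟨c, hc⟩ := h
  have hscale (x : Fin 3 → ℂ) :
      eval (s * x) simplicialVolDet = c * eval x simplicialVolDet := by
    rw [← eval_aeval_C_mul_X, hc, eval_mul, eval_C]
  have h01 := hscale ![1, 1, 0]
  have h12 := hscale ![0, 1, 1]
  rw [eval_simplicialVolDet_of_apply_two_eq_zero (by simp),
    eval_simplicialVolDet_of_apply_two_eq_zero (by simp)] at h01
  rw [eval_simplicialVolDet_of_apply_zero_eq_zero (by simp),
    eval_simplicialVolDet_of_apply_zero_eq_zero (by simp)] at h12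
  exact ⟨by simpa [sub_eq_zero] using h01, by simpa [sub_eq_zero] using h12⟩
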